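/- arXiv:1703.04188 — 3 statements merged into one kernel-verified Lean document; each statement's English description precedes it below -/
import Mathlib

section
/- Let f : [0,1] → [0,1] be a continuous strictly increasing piecewise monomial bijection with break-points 0 = t₀ < t₁ < ⋯ < tₙ = 1 and degree d_i on (t_{i−1}, t_i), where d₁ ≤ d₂ ≤ ⋯ ≤ dₙ are positive integers with dₙ = d. Define N(r) = d / deg⁻_f(f^{−1}(r)) for r ∈ (0,1), where deg⁻_f(x) denotes the left degree of f at x. Then N is a non-increasing left-continuous step function on (0,1), its values divide d, and its points of discontinuity are exactly the images f(t_i) of the interior break-points t_i of f at which d_i < d_{i+1}. -/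
/-- Lemma 1.6(ii)–(iii) of the paper, abstracted: for a radial morphism of
discs of degree `d` with profile function `f` (piecewise monomial with
break-points `tᵢ` and non-decreasing degrees `dᵢ` dividing `d`), the function
`N(r) = d / deg⁻_f(f⁻¹(r))` is a non-increasing left-continuous step function
on `(0,1)` whose values divide `d`, and its points of discontinuity are exactly
the images `f(tᵢ)` of the interior break-points at which `dᵢ < d_{i+1}`. -/
theorem component_count_function
    (n d : ℕ) (hn : 1 ≤ n) (hd : 1 ≤ d)
    (t : ℕ → ℝ) (α : ℕ → ℝ) (dv : ℕ → ℕ) (f : ℝ → ℝ) (N : ℝ → ℕ)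
    (ht0 : t 0 = 0) (htn : t n = 1) (htmono : ∀ i < n, t i < t (i + 1))
    (hα : ∀ i, 1 ≤ i → i ≤ n → 0 < α i)
    (hdpos : ∀ i, 1 ≤ i → i ≤ n → 0 < dv i)
    (hdmono : ∀ i, 1 ≤ i → i < n → dv i ≤ dv (i + 1))
    (hdn : dv n = d) (hdvd : ∀ i, 1 ≤ i → i ≤ n → dv i ∣ d)
    (hf : ∀ i, 1 ≤ i → i ≤ n → ∀ s ∈ Set.Icc (t (i - 1)) (t i), f s = α i * s ^ dv i)
    (hcont : ContinuousOn f (Set.Icc 0 1)) (hmono : StrictMonoOn f (Set.Icc 0 1))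
    (hbij : Set.BijOn f (Set.Icc 0 1) (Set.Icc 0 1))
    (hN : ∀ i, 1 ≤ i → i ≤ n → ∀ r ∈ Set.Ioc (f (t (i - 1))) (f (t i)), N r = d / dv i) :
    (∀ r r' : ℝ, 0 < r → r ≤ r' → r' < 1 → N r' ≤ N r) ∧
    (∀ r ∈ Set.Ioo (0 : ℝ) 1, N r ∣ d) ∧
    (∀ r ∈ Set.Ioo (0 : ℝ) 1, ∃ ε > 0, ∀ s ∈ Set.Ioc (r - ε) r, 0 < s → N s = N r) ∧
    (∀ r ∈ Set.Ioo (0 : ℝ) 1,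
      ((¬ ∃ ε > 0, ∀ s ∈ Set.Ioo r (r + ε), N s = N r) ↔
        ∃ i, 1 ≤ i ∧ i < n ∧ r = f (t i) ∧ dv i < dv (i + 1))) := by
  classical
  have htlt : ∀ i j, i < j → j ≤ n → t i < t j := by
    intro i j hij hjn
    induction j with
    | zero => omega
    | succ k ih =>
      rcases Nat.lt_succ_iff_lt_or_eq.mp hij with h | h
      · exact (ih h (by omega)).trans (htmono k (by omega))
      · subst h; exact htmono i (by omega)
  have htmem : ∀ i, i ≤ n → t i ∈ Set.Icc (0:ℝ) 1 := by
    intro i hi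
    constructor
    · rcases Nat.eq_zero_or_pos i with h | h
      · rw [h, ht0]
      · rw [← ht0]; exact (htlt 0 i h hi).le
    · rcases eq_or_lt_of_le hi with h | h
      · exact le_of_eq (by rw [h, htn])
      · rw [← htn]; exact (htlt i n h le_rfl).le
  have hglt : ∀ i j, i < j → j ≤ n → f (t i) < f (t j) := fun i j hij hjn =>
    hmono (htmem i (by omega)) (htmem j hjn) (htlt i j hij hjn)
  have hgmono : ∀ i j, i ≤ j → j ≤ n → f (t i) ≤ f (t j) := by
    intro i j hij hjn
    rcases eq_or_lt_of_le hij with h | h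
    · rw [h]
    · exact (hglt i j h hjn).le
  have hf0 : f (t 0) = 0 := by
    have h0 : (0:ℝ) ∈ Set.Icc (t 0) (t 1) :=
      ⟨ht0.le, by rw [← ht0]; exact (htmono 0 (by omega)).le⟩
    have hfs := hf 1 le_rfl hn 0 h0
    rw [ht0, hfs, zero_pow (hdpos 1 le_rfl hn).ne', mul_zero]
  have hf1 : f (t n) = 1 := by
    rw [htn]
    obtain ⟨x, hx, hfx⟩ := hbij.2.2 (Set.right_mem_Icc.mpr zero_le_one)
    have h1 : f 1 ∈ Set.Icc (0:ℝ) 1 := hbij.1 (Set.right_mem_Icc.mpr zero_le_one)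
    have h2 : f x ≤ f 1 := hmono.monotoneOn hx (Set.right_mem_Icc.mpr zero_le_one) hx.2
    exact le_antisymm h1.2 (hfx ▸ h2)
  have hdvmono : ∀ i j, 1 ≤ i → i ≤ j → j ≤ n → dv i ≤ dv j := by
    intro i j h1 hij hjn
    induction j with
    | zero => omega
    | succ k ih =>
      rcases Nat.lt_succ_iff_lt_or_eq.mp (Nat.lt_succ_of_le hij) with h | h
      · exact (ih (by omega) (by omega)).trans (hdmono k (by omega) (by omega))
      · rw [← h]
  have hNval : ∀ r, 0 < r → r ≤ 1 →
      ∃ i, 1 ≤ i ∧ i ≤ n ∧ f (t (i-1)) < r ∧ r ≤ f (t i) ∧ N r = d / dv i := by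
    intro r hr0 hr1
    have hex : ∃ i, r ≤ f (t i) := ⟨n, by rw [hf1]; exact hr1⟩
    set i := Nat.find hex with hidef
    have hle : r ≤ f (t i) := Nat.find_spec hex
    have hi1 : 1 ≤ i := by
      rcases Nat.eq_zero_or_pos i with h | h
      · exfalso; rw [h, hf0] at hle; linarith
      · exact h
    have hin : i ≤ n := Nat.find_le (by rw [hf1]; exact hr1)
    have hlt : ¬ r ≤ f (t (i-1)) := Nat.find_min hex (by omega)
    refine ⟨i, hi1, hin, not_le.mp hlt, hle, ?_⟩
    exact hN i hi1 hin r ⟨not_le.mp hlt, hle⟩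
  refine ⟨?_, ?_, ?_, ?_⟩
  · -- monotone
    intro r r' hr hle hlt
    obtain ⟨i, hi1, hin, hi3, hi4, hiN⟩ := hNval r hr (le_trans hle hlt.le)
    obtain ⟨j, hj1, hjn, hj3, hj4, hjN⟩ := hNval r' (lt_of_lt_of_le hr hle) hlt.le
    have hij : i ≤ j := by
      by_contra h
      push_neg at h
      have hle2 : f (t j) ≤ f (t (i-1)) := hgmono j (i-1) (by omega) (by omega)
      linarith
    rw [hiN, hjN]
    exact Nat.div_le_div_left (hdvmono i j hi1 hij hjn) (hdpos i hi1 hin)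
  · -- divides
    intro r hr
    obtain ⟨i, hi1, hin, _, _, hiN⟩ := hNval r hr.1 hr.2.le
    rw [hiN]
    exact Nat.div_dvd_of_dvd (hdvd i hi1 hin)
  · -- left continuity
    intro r hr
    obtain ⟨i, hi1, hin, hi3, hi4, hiN⟩ := hNval r hr.1 hr.2.le
    refine ⟨r - f (t (i-1)), by linarith, ?_⟩
    intro s hs hs0
    rw [hiN, hN i hi1 hin s ⟨by linarith [hs.1], le_trans hs.2 hi4⟩]
  · -- discontinuity characterization
    intro r hr
    obtain ⟨i, hi1, hin, hi3, hi4, hiN⟩ := hNval r hr.1 hr.2.le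
    constructor
    · intro hnot
      by_contra hno
      push_neg at hno
      apply hnot
      rcases lt_or_eq_of_le hi4 with hltc | heq
      · refine ⟨f (t i) - r, by linarith, ?_⟩
        intro s hs
        rw [hiN, hN i hi1 hin s ⟨lt_trans hi3 hs.1, by linarith [hs.2]⟩]
      · have hin' : i < n := by
          rcases eq_or_lt_of_le hin with h | h
          · exfalso; rw [h, hf1] at heq; exact hr.2.ne heq
          · exact h
        have heqd : dv i = dv (i+1) :=
          le_antisymm (hdmono i hi1 hin') (hno i hi1 hin' heq)
        have hjj1 : f (t i) < f (t (i+1)) := hglt i (i+1) (by omega) (by omega)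
        refine ⟨f (t (i+1)) - f (t i), by linarith, ?_⟩
        intro s hs
        have hs1 : f (t i) < s := by rw [← heq]; exact hs.1
        have hs2 : s ≤ f (t (i+1)) := by
          have h2 := hs.2; linarith [heq.le, heq.ge]
        have hNs : N s = d / dv (i+1) :=
          hN (i+1) (by omega) (by omega) s ⟨hs1, hs2⟩
        rw [hNs, hiN, heqd]
    · rintro ⟨j, hj1, hjn, rfl, hjd⟩
      have hNr : N (f (t j)) = d / dv j :=
        hN j hj1 hjn.le _ ⟨hglt (j-1) j (by omega) (by omega), le_rfl⟩
      rintro ⟨ε, hε, hloc⟩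
      have hjj1 : f (t j) < f (t (j+1)) := hglt j (j+1) (by omega) (by omega)
      set s := min (f (t j) + ε / 2) ((f (t j) + f (t (j+1))) / 2) with hsdef
      have hs1 : f (t j) < s := lt_min (by linarith) (by linarith)
      have hs2 : s < f (t j) + ε := (min_le_left _ _).trans_lt (by linarith)
      have hs3 : s ≤ f (t (j+1)) := (min_le_right _ _).trans (by linarith)
      have hNs : N s = d / dv (j+1) := hN (j+1) (by omega) (by omega) s ⟨hs1, hs3⟩
      have heq := hloc s ⟨hs1, hs2⟩
      rw [hNs, hNr] at heq
      have hq : 0 < d / dv j :=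
        Nat.div_pos (Nat.le_of_dvd hd (hdvd j hj1 hjn.le)) (hdpos j hj1 hjn.le)
      have h3 : d / dv j * dv j = d := Nat.div_mul_cancel (hdvd j hj1 hjn.le)
      have h1 : d / dv j * dv (j+1) ≤ d / dv (j+1) * dv (j+1) :=
        Nat.mul_le_mul_right _ heq.ge
      have h2 : d / dv (j+1) * dv (j+1) ≤ d := Nat.div_mul_le_self d _
      have h4 : d / dv j * (dv j + 1) ≤ d / dv j * dv (j+1) :=
        Nat.mul_le_mul_left _ hjd
      have h5 : d / dv j * (dv j + 1) = d + d / dv j := by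
        rw [Nat.mul_add, h3, mul_one]
      omega
end

section
/- Let f, g : [0,1] → [0,1] be continuous, strictly increasing, piecewise monomial bijections with f(0)=g(0)=0 and f(1)=g(1)=1, such that every piece of f has positive integer degree and every piece of g has positive integer degree. Then the composition g ∘ f is a continuous, strictly increasing, piecewise monomial bijection of [0,1] with integer degrees, and for every point s in the interior, the left degree satisfies deg⁻_{g∘f}(s) = deg⁻_g(f(s)) · deg⁻_f(s). -/
/-- `f` is piecewise monomial on `[0,1]`: there is a finite subdivision
`0 = t₀ < t₁ < ⋯ < tₙ = 1` such that on each piece `f` has the form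
`t ↦ α·t^d` with `α > 0` and `d` a positive integer. -/
def PiecewiseMonomialOn (f : ℝ → ℝ) : Prop :=
  ∃ (n : ℕ) (t : ℕ → ℝ) (α : ℕ → ℝ) (d : ℕ → ℕ),
    1 ≤ n ∧ t 0 = 0 ∧ t n = 1 ∧ (∀ i < n, t i < t (i + 1)) ∧
    (∀ i < n, 0 < α (i + 1) ∧ 0 < d (i + 1)) ∧
    (∀ i < n, ∀ s ∈ Set.Icc (t i) (t (i + 1)), f s = α (i + 1) * s ^ d (i + 1))

/-- `f` has left degree `d` at the interior point `s`: immediately to the left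
of `s`, `f` is given by a monomial of degree `d`. -/
def HasLeftDegreeAt (f : ℝ → ℝ) (s : ℝ) (d : ℕ) : Prop :=
  ∃ (α ε : ℝ), 0 < α ∧ 0 < ε ∧ ∀ u ∈ Set.Icc (s - ε) s, f u = α * u ^ d

/-!
On a subinterval of `[0,1]` whose interior contains neither a breakpoint of `f` nor a preimage
under `f` of a breakpoint of `g`, `f` is a single monomial `α t^d`, and by the intermediate value
theorem it maps the subinterval into a single piece `β t^e` of `g`; there `g ∘ f = β α^e t^(de)`.
These points are finitely many because `f` is injective. The left degree is the same computation
on a left neighbourhood of `s`, which the continuous increasing `f` maps into a left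
neighbourhood of `f s`.
-/

open Set Filter Topology

def MonomialOn (f : ℝ → ℝ) (I : Set ℝ) : Prop :=
  ∃ (α : ℝ) (d : ℕ), 0 < α ∧ 0 < d ∧ ∀ x ∈ I, f x = α * x ^ d

namespace MonomialOn

variable {f g : ℝ → ℝ} {I J : Set ℝ}

lemma mono (hf : MonomialOn f J) (hIJ : I ⊆ J) : MonomialOn f I :=
  let ⟨α, d, hα, hd, hfJ⟩ := hf
  ⟨α, d, hα, hd, fun x hx => hfJ x (hIJ hx)⟩

lemma comp (hg : MonomialOn g J) (hf : MonomialOn f I) (hmaps : MapsTo f I J) :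
    MonomialOn (g ∘ f) I := by
  obtain ⟨β, e, hβ, he, hgJ⟩ := hg
  obtain ⟨α, d, hα, hd, hfI⟩ := hf
  refine ⟨β * α ^ e, d * e, by positivity, by positivity, fun x hx => ?_⟩
  rw [Function.comp_apply, hgJ _ (hmaps hx), hfI x hx, mul_pow, ← pow_mul, mul_assoc]

end MonomialOn

/-- Every breakpoint of `f` in `[0,1]` lies in `S`. -/
def HasBreakpointsIn (f : ℝ → ℝ) (S : Set ℝ) : Prop :=
  ∀ a b : ℝ, 0 ≤ a → a < b → b ≤ 1 → Disjoint (Ioo a b) S → MonomialOn f (Icc a b)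

lemma exists_lt_succ_of_le_of_lt {α : Type*} [LinearOrder α] {t : ℕ → α} {n : ℕ} {a : α}
    (h0 : t 0 ≤ a) (hn : a < t n) : ∃ i < n, t i ≤ a ∧ a < t (i + 1) := by
  classical
  have hex : ∃ k, a < t k := ⟨n, hn⟩
  have hpos : Nat.find hex ≠ 0 := fun h => (h ▸ Nat.find_spec hex).not_ge h0
  have hle : Nat.find hex ≤ n := Nat.find_min' hex hn
  refine ⟨Nat.find hex - 1, by omega, not_lt.1 (Nat.find_min hex (by omega)), ?_⟩
  rw [Nat.sub_add_cancel (Nat.one_le_iff_ne_zero.2 hpos)]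
  exact Nat.find_spec hex

lemma Set.Finite.exists_subdivision {α : Type*} [LinearOrder α] {S : Set α} {a b : α}
    (hS : S.Finite) (ha : a ∈ S) (hb : b ∈ S) (hab : a < b) (hSab : S ⊆ Icc a b) :
    ∃ (n : ℕ) (t : ℕ → α), 1 ≤ n ∧ t 0 = a ∧ t n = b ∧ (∀ i < n, t i < t (i + 1)) ∧
      (∀ i ≤ n, t i ∈ S) ∧ ∀ i < n, Disjoint (Ioo (t i) (t (i + 1))) S := by
  set F := hS.toFinset
  set e := F.orderEmbOfFin rfl
  have haF : a ∈ F := hS.mem_toFinset.2 ha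
  have hbF : b ∈ F := hS.mem_toFinset.2 hb
  have hk : 1 < F.card := Finset.one_lt_card.2 ⟨a, haF, b, hbF, hab.ne⟩
  let t : ℕ → α := fun i => if h : i < F.card then e ⟨i, h⟩ else b
  have ht : ∀ i (h : i < F.card), t i = e ⟨i, h⟩ := fun i h => dif_pos h
  refine ⟨F.card - 1, t, by omega, ?_, ?_, fun i hi => ?_, fun i hi => ?_, fun i hi => ?_⟩
  · rw [ht 0 (by omega), Finset.orderEmbOfFin_zero rfl (by omega)]
    exact le_antisymm (F.min'_le a haF)
      (F.le_min' _ _ fun y hy => (hSab (hS.mem_toFinset.1 hy)).1)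
  · rw [ht _ (by omega), Finset.orderEmbOfFin_last rfl (by omega)]
    exact le_antisymm (F.max'_le _ _ fun y hy => (hSab (hS.mem_toFinset.1 hy)).2)
      (F.le_max' b hbF)
  · rw [ht i (by omega), ht (i + 1) (by omega)]
    exact e.strictMono (Fin.mk_lt_mk.2 i.lt_succ_self)
  · rw [ht i (by omega)]
    exact hS.mem_toFinset.1 (F.orderEmbOfFin_mem rfl _)
  · refine Set.disjoint_left.2 fun x hx hxS => ?_
    obtain ⟨j, rfl⟩ : x ∈ Set.range e := by
      rw [Finset.range_orderEmbOfFin]; exact hS.mem_toFinset.2 hxS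
    obtain ⟨hij, hji⟩ := hx
    rw [ht i (by omega), e.lt_iff_lt, Fin.lt_def] at hij
    rw [ht (i + 1) (by omega), e.lt_iff_lt, Fin.lt_def] at hji
    simp only at hij hji
    omega

theorem piecewiseMonomialOn_iff_exists_finite {f : ℝ → ℝ} :
    PiecewiseMonomialOn f ↔ ∃ S : Set ℝ, S.Finite ∧ HasBreakpointsIn f S := by
  constructor
  · rintro ⟨n, t, α, d, -, ht0, htn, -, hαd, hf⟩
    refine ⟨t '' Iic n, (finite_Iic n).image t, fun a b ha hab hb hdisj => ?_⟩
    obtain ⟨i, hi, hia, hai⟩ := exists_lt_succ_of_le_of_lt (ht0 ▸ ha) (htn ▸ hab.trans_le hb)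
    have hbi : b ≤ t (i + 1) := not_lt.1 fun hib =>
      Set.disjoint_left.1 hdisj ⟨hai, hib⟩ ⟨i + 1, Set.mem_Iic.2 hi, rfl⟩
    exact MonomialOn.mono ⟨α (i + 1), d (i + 1), (hαd i hi).1, (hαd i hi).2, hf i hi⟩
      (Icc_subset_Icc hia hbi)
  · rintro ⟨S, hS, hf⟩
    set S' : Set ℝ := insert 0 (insert 1 (S ∩ Icc 0 1))
    have hS'01 : S' ⊆ Icc 0 1 := insert_subset (by simp) (insert_subset (by simp) inter_subset_right)
    obtain ⟨n, t, hn, ht0, htn, htlt, htS', hgap⟩ :=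
      ((hS.inter_of_left _).insert 1).insert 0 |>.exists_subdivision (mem_insert _ _)
        (mem_insert_of_mem _ (mem_insert _ _)) zero_lt_one hS'01
    have hpiece : ∀ i < n, MonomialOn f (Icc (t i) (t (i + 1))) := by
      intro i hi
      have hti := hS'01 (htS' i hi.le)
      have hti' := hS'01 (htS' (i + 1) hi)
      refine hf _ _ hti.1 (htlt i hi) hti'.2 (Set.disjoint_left.2 fun x hx hxS => ?_)
      exact Set.disjoint_left.1 (hgap i hi) hx <| mem_insert_of_mem _ <|
        mem_insert_of_mem _ ⟨hxS, hti.1.trans hx.1.le, hx.2.le.trans hti'.2⟩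
    choose! α d hα hd hfα using hpiece
    exact ⟨n, t, fun i => α (i - 1), fun i => d (i - 1), hn, ht0, htn, htlt,
      fun i hi => ⟨hα i hi, hd i hi⟩, hfα⟩

lemma HasBreakpointsIn.comp {f g : ℝ → ℝ} {S T : Set ℝ} (hg : HasBreakpointsIn g T)
    (hf : HasBreakpointsIn f S) (hfc : ContinuousOn f (Icc 0 1))
    (hfm : StrictMonoOn f (Icc 0 1)) (hmaps : MapsTo f (Icc 0 1) (Icc 0 1)) :
    HasBreakpointsIn (g ∘ f) (S ∪ Icc 0 1 ∩ f ⁻¹' T) := by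
  intro a b ha hab hb hdisj
  have ha01 : a ∈ Icc (0 : ℝ) 1 := ⟨ha, hab.le.trans hb⟩
  have hb01 : b ∈ Icc (0 : ℝ) 1 := ⟨ha.trans hab.le, hb⟩
  have hsub : Icc a b ⊆ Icc 0 1 := Icc_subset_Icc ha hb
  refine MonomialOn.comp (J := Icc (f a) (f b)) ?_
    (hf a b ha hab hb (hdisj.mono_right subset_union_left)) fun x hx =>
      ⟨hfm.monotoneOn ha01 (hsub hx) hx.1, hfm.monotoneOn (hsub hx) hb01 hx.2⟩
  refine hg _ _ (hmaps ha01).1 (hfm ha01 hb01 hab) (hmaps hb01).2 ?_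
  refine Set.disjoint_left.2 fun y hy hyT => ?_
  obtain ⟨x, hx, rfl⟩ := intermediate_value_Ioo hab.le (hfc.mono hsub) hy
  exact Set.disjoint_left.1 hdisj hx (Or.inr ⟨hsub (Ioo_subset_Icc_self hx), hyT⟩)

theorem PiecewiseMonomialOn.comp {f g : ℝ → ℝ} (hg : PiecewiseMonomialOn g)
    (hf : PiecewiseMonomialOn f) (hfc : ContinuousOn f (Icc 0 1))
    (hfm : StrictMonoOn f (Icc 0 1)) (hmaps : MapsTo f (Icc 0 1) (Icc 0 1)) :
    PiecewiseMonomialOn (g ∘ f) := by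
  obtain ⟨T, hT, hgT⟩ := piecewiseMonomialOn_iff_exists_finite.1 hg
  obtain ⟨S, hS, hfS⟩ := piecewiseMonomialOn_iff_exists_finite.1 hf
  have hpre : (Icc 0 1 ∩ f ⁻¹' T).Finite :=
    Set.Finite.of_finite_image (hT.subset (image_subset_iff.2 fun _ hx => hx.2))
      (hfm.injOn.mono inter_subset_left)
  exact piecewiseMonomialOn_iff_exists_finite.2
    ⟨_, hS.union hpre, hgT.comp hfS hfc hfm hmaps⟩

theorem hasLeftDegreeAt_iff_eventually {f : ℝ → ℝ} {s : ℝ} {d : ℕ} :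
    HasLeftDegreeAt f s d ↔ ∃ α, 0 < α ∧ ∀ᶠ u in 𝓝[≤] s, f u = α * u ^ d := by
  constructor
  · rintro ⟨α, ε, hα, hε, hf⟩
    exact ⟨α, hα, mem_nhdsLE_iff_exists_Icc_subset.2 ⟨s - ε, by linarith, hf⟩⟩
  · rintro ⟨α, hα, hf⟩
    obtain ⟨l, hl, hsub⟩ := mem_nhdsLE_iff_exists_Icc_subset.1 hf
    exact ⟨α, s - l, hα, sub_pos.2 hl, by rwa [sub_sub_cancel]⟩

theorem HasLeftDegreeAt.comp {f g : ℝ → ℝ} {s : ℝ} {df dg : ℕ}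
    (hg : HasLeftDegreeAt g (f s) dg) (hf : HasLeftDegreeAt f s df) (hs : 0 < s) :
    HasLeftDegreeAt (g ∘ f) s (dg * df) := by
  obtain ⟨β, hβ, hg⟩ := hasLeftDegreeAt_iff_eventually.1 hg
  obtain ⟨α, hα, hf⟩ := hasLeftDegreeAt_iff_eventually.1 hf
  have hfs : f s = α * s ^ df := (eventually_nhdsWithin_iff.1 hf).self_of_nhds (mem_Iic.2 le_rfl)
  -- `s > 0` makes the monomial `f` increasing on a left neighbourhood of `s`
  have hfle : ∀ᶠ u in 𝓝[≤] s, f u ∈ Iic (f s) := by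
    filter_upwards [hf, self_mem_nhdsWithin, nhdsWithin_le_nhds (Ioi_mem_nhds hs)]
      with u hfu hus hu
    rw [mem_Iic, hfu, hfs]
    exact mul_le_mul_of_nonneg_left (pow_le_pow_left₀ (le_of_lt hu) hus df) hα.le
  have hcont : Tendsto f (𝓝[≤] s) (𝓝 (f s)) := by
    rw [hfs]
    refine (((continuous_const.mul (continuous_pow df)).tendsto s).mono_left
      nhdsWithin_le_nhds).congr' ?_
    exact hf.mono fun u hu => hu.symm
  have htend : Tendsto f (𝓝[≤] s) (𝓝[≤] (f s)) := tendsto_nhdsWithin_iff.2 ⟨hcont, hfle⟩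
  refine hasLeftDegreeAt_iff_eventually.2 ⟨β * α ^ dg, by positivity, ?_⟩
  filter_upwards [hf, htend.eventually hg] with u hfu hgu
  rw [Function.comp_apply, hgu, hfu, mul_pow, ← pow_mul, mul_comm dg df]
  ring

theorem piecewise_monomial_comp_general
    (f g : ℝ → ℝ)
    (hfp : PiecewiseMonomialOn f) (hgp : PiecewiseMonomialOn g)
    (hfc : ContinuousOn f (Set.Icc 0 1)) (hgc : ContinuousOn g (Set.Icc 0 1))
    (hfm : StrictMonoOn f (Set.Icc 0 1)) (hgm : StrictMonoOn g (Set.Icc 0 1))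
    (hfb : Set.BijOn f (Set.Icc 0 1) (Set.Icc 0 1))
    (hgb : Set.BijOn g (Set.Icc 0 1) (Set.Icc 0 1)) :
    PiecewiseMonomialOn (g ∘ f) ∧
    ContinuousOn (g ∘ f) (Set.Icc 0 1) ∧
    StrictMonoOn (g ∘ f) (Set.Icc 0 1) ∧
    Set.BijOn (g ∘ f) (Set.Icc 0 1) (Set.Icc 0 1) ∧
    (∀ s ∈ Set.Ioo (0 : ℝ) 1, ∀ df dg : ℕ,
      HasLeftDegreeAt f s df → HasLeftDegreeAt g (f s) dg →
      HasLeftDegreeAt (g ∘ f) s (dg * df)) :=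
  ⟨hgp.comp hfp hfc hfm hfb.mapsTo, hgc.comp hfc hfb.mapsTo, hgm.comp hfm hfb.mapsTo,
    hgb.comp hfb, fun _ hs _ _ hf hg => hg.comp hf hs.1⟩

/-- Compositions of continuous strictly increasing piecewise monomial
bijections of `[0,1]` (with positive integer degrees) are again such, and left
degrees are multiplicative: `deg⁻_{g∘f}(s) = deg⁻_g(f(s)) · deg⁻_f(s)`. -/
theorem piecewise_monomial_comp
    (f g : ℝ → ℝ)
    (hfp : PiecewiseMonomialOn f) (hgp : PiecewiseMonomialOn g)
    (hfc : ContinuousOn f (Set.Icc 0 1)) (hgc : ContinuousOn g (Set.Icc 0 1))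
    (hfm : StrictMonoOn f (Set.Icc 0 1)) (hgm : StrictMonoOn g (Set.Icc 0 1))
    (hf0 : f 0 = 0) (hf1 : f 1 = 1) (hg0 : g 0 = 0) (hg1 : g 1 = 1)
    (hfb : Set.BijOn f (Set.Icc 0 1) (Set.Icc 0 1))
    (hgb : Set.BijOn g (Set.Icc 0 1) (Set.Icc 0 1)) :
    PiecewiseMonomialOn (g ∘ f) ∧
    ContinuousOn (g ∘ f) (Set.Icc 0 1) ∧
    StrictMonoOn (g ∘ f) (Set.Icc 0 1) ∧
    Set.BijOn (g ∘ f) (Set.Icc 0 1) (Set.Icc 0 1) ∧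
    (∀ s ∈ Set.Ioo (0 : ℝ) 1, ∀ df dg : ℕ,
      HasLeftDegreeAt f s df → HasLeftDegreeAt g (f s) dg →
      HasLeftDegreeAt (g ∘ f) s (dg * df)) :=
  piecewise_monomial_comp_general f g hfp hgp hfc hgc hfm hgm hfb hgb
end

section
/- Let f : [0,1] → [0,1] be a continuous strictly increasing piecewise monomial bijection whose pieces have positive integer degrees d₁ ≤ ⋯ ≤ dₙ with break-points 0 = t₀ < ⋯ < tₙ = 1, let d = dₙ and suppose every d_i divides d, and set n_i = d/d_i. Suppose further d₁ = 1. Then the function g : [0,1] → [0,1] defined so that g is piecewise monomial with the same break-points t_i and degree n_i on (t_{i−1}, t_i), normalized by g(0) = 0 and continuity, satisfies g(1) = ∏_{i=1}^{n-1} t_i^{n_i − n_{i+1}} ≤ 1, with equality if and only if n = 1. -/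
/-!
Continuity of `g` at `tᵢ` gives `βᵢ₊₁ = βᵢ · tᵢ^(nᵢ - nᵢ₊₁)`, so `g 1 = βₙ` telescopes to the
product. Since `dᵢ < dᵢ₊₁` both divide `d`, the exponents `nᵢ - nᵢ₊₁` are positive, and as
`0 < tᵢ < 1` for `1 ≤ i < n` every factor lies in `(0, 1)`.
-/

open Finset

theorem eq_mul_pow_sub_of_mul_pow_eq {M : Type*} [CommMonoidWithZero M] [IsRightCancelMulZero M]
    {b b' x : M} {m m' : ℕ} (hx : x ≠ 0) (hm : m' ≤ m) (h : b * x ^ m = b' * x ^ m') :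
    b' = b * x ^ (m - m') :=
  mul_right_cancel₀ (pow_ne_zero m' hx) <| by
    rw [← h, mul_assoc, ← pow_add, Nat.sub_add_cancel hm]

theorem eq_mul_prod_Ico_pow_sub_of_mul_pow_eq {M : Type*} [CommMonoidWithZero M]
    [IsRightCancelMulZero M] {β x : ℕ → M} {m : ℕ → ℕ} {n : ℕ}
    (hx : ∀ i, 1 ≤ i → i < n → x i ≠ 0) (hm : ∀ i, 1 ≤ i → i < n → m (i + 1) ≤ m i)
    (h : ∀ i, 1 ≤ i → i < n → β i * x i ^ m i = β (i + 1) * x i ^ m (i + 1)) :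
    ∀ k, 1 ≤ k → k ≤ n → β k = β 1 * ∏ i ∈ Ico 1 k, x i ^ (m i - m (i + 1)) := by
  intro k hk
  induction k, hk using Nat.le_induction with
  | base => simp
  | succ k hk ih =>
    intro hkn
    rw [prod_Ico_succ_top hk, ← mul_assoc, ← ih (Nat.le_of_succ_le hkn)]
    exact eq_mul_pow_sub_of_mul_pow_eq (hx k hk hkn) (hm k hk hkn) (h k hk hkn)

theorem Finset.prod_eq_one_iff_eq_empty_of_mem_Ioo {ι R : Type*} [CommSemiring R]
    [PartialOrder R] [IsStrictOrderedRing R] {s : Finset ι} {f : ι → R}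
    (hf : ∀ i ∈ s, f i ∈ Set.Ioo 0 1) :
    ∏ i ∈ s, f i = 1 ↔ s = ∅ := by
  refine ⟨fun h => ?_, fun h => by simp [h]⟩
  by_contra hs
  have := prod_lt_prod_of_nonempty (g := fun _ => 1) (fun i hi => (hf i hi).1)
    (fun i hi => (hf i hi).2) (nonempty_iff_ne_empty.2 hs)
  simp [h] at this

theorem inverse_degree_profile_value_general
    (n dd : ℕ) (hn : 1 ≤ n) (hdd : 1 ≤ dd)
    (t : ℕ → ℝ) (β : ℕ → ℝ) (dv nv : ℕ → ℕ) (g : ℝ → ℝ)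
    (ht0 : t 0 = 0) (htn : t n = 1) (htmono : ∀ i < n, t i < t (i + 1))
    (hdinc : ∀ i, 1 ≤ i → i < n → dv i < dv (i + 1))
    (hdvd : ∀ i, 1 ≤ i → i ≤ n → dv i ∣ dd)
    (hnv : ∀ i, 1 ≤ i → i ≤ n → nv i = dd / dv i)
    (hg : ∀ i, 1 ≤ i → i ≤ n → ∀ s ∈ Set.Icc (t (i - 1)) (t i), g s = β i * s ^ nv i)
    (hβ1 : β 1 = 1)
    (hgcont : ∀ i, 1 ≤ i → i < n → β i * t i ^ nv i = β (i + 1) * t i ^ nv (i + 1)) :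
    g 1 = ∏ i ∈ Finset.Ico 1 n, t i ^ (nv i - nv (i + 1)) ∧
    g 1 ≤ 1 ∧ (g 1 = 1 ↔ n = 1) := by
  have ht : StrictMonoOn t (Set.Iic n) := strictMonoOn_Iic_of_lt_succ htmono
  have ht_mem : ∀ i, 1 ≤ i → i < n → t i ∈ Set.Ioo 0 1 := fun i h1 h2 => by
    have hi : i ∈ Set.Iic n := Set.mem_Iic.2 h2.le
    exact ⟨ht0 ▸ ht (Set.mem_Iic.2 n.zero_le) hi h1, htn ▸ ht hi Set.self_mem_Iic h2⟩
  have hnv_lt : ∀ i, 1 ≤ i → i < n → nv (i + 1) < nv i := fun i h1 h2 => by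
    rw [hnv i h1 h2.le, hnv (i + 1) (by omega) h2,
      Nat.div_lt_div_left (by omega) (hdvd _ (by omega) h2) (hdvd i h1 h2.le)]
    exact hdinc i h1 h2
  have hfactor : ∀ i ∈ Ico 1 n, t i ^ (nv i - nv (i + 1)) ∈ Set.Ioo 0 1 := by
    intro i hi
    obtain ⟨h1, h2⟩ := mem_Ico.1 hi
    obtain ⟨hpos, hlt⟩ := ht_mem i h1 h2
    exact ⟨pow_pos hpos _, pow_lt_one₀ hpos.le hlt (by have := hnv_lt i h1 h2; omega)⟩
  have hβn := eq_mul_prod_Ico_pow_sub_of_mul_pow_eq (fun i h1 h2 => (ht_mem i h1 h2).1.ne')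
    (fun i h1 h2 => (hnv_lt i h1 h2).le) hgcont n hn le_rfl
  have hg1 : g 1 = ∏ i ∈ Ico 1 n, t i ^ (nv i - nv (i + 1)) := by
    have h1 : (1 : ℝ) ∈ Set.Icc (t (n - 1)) (t n) :=
      htn ▸ ⟨(ht (Set.mem_Iic.2 (n.sub_le 1)) Set.self_mem_Iic (by omega)).le, le_rfl⟩
    rw [hg n hn le_rfl 1 h1, hβn, hβ1, one_pow, one_mul, mul_one]
  refine ⟨hg1, hg1 ▸ prod_le_one (fun i hi => (hfactor i hi).1.le)
    (fun i hi => (hfactor i hi).2.le), ?_⟩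
  rw [hg1, prod_eq_one_iff_eq_empty_of_mem_Ioo hfactor, Ico_eq_empty_iff]
  omega

/-- Lemma 3.12 context: let `f` be a continuous strictly increasing piecewise
monomial bijection of `[0,1]` with break-points `tᵢ` and strictly increasing
positive degrees `dᵢ` dividing `d = dₙ`, with `d₁ = 1`, and let `g` be the
piecewise monomial function with the same break-points and degrees
`nᵢ = d/dᵢ`, normalized by `g(0) = 0` and continuity (so `β₁ = 1`). Then
`g(1) = ∏_{i=1}^{n−1} tᵢ^{nᵢ − n_{i+1}} ≤ 1`, with equality iff `n = 1`. -/
theorem inverse_degree_profile_value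
    (n dd : ℕ) (hn : 1 ≤ n) (hdd : 1 ≤ dd)
    (t : ℕ → ℝ) (α β : ℕ → ℝ) (dv nv : ℕ → ℕ) (f g : ℝ → ℝ)
    (ht0 : t 0 = 0) (htn : t n = 1) (htmono : ∀ i < n, t i < t (i + 1))
    (hαpos : ∀ i, 1 ≤ i → i ≤ n → 0 < α i)
    (hdpos : ∀ i, 1 ≤ i → i ≤ n → 0 < dv i)
    (hd1 : dv 1 = 1) (hdn : dv n = dd)
    (hdinc : ∀ i, 1 ≤ i → i < n → dv i < dv (i + 1))
    (hdvd : ∀ i, 1 ≤ i → i ≤ n → dv i ∣ dd)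
    (hnv : ∀ i, 1 ≤ i → i ≤ n → nv i = dd / dv i)
    (hf : ∀ i, 1 ≤ i → i ≤ n → ∀ s ∈ Set.Icc (t (i - 1)) (t i), f s = α i * s ^ dv i)
    (hfc : ContinuousOn f (Set.Icc 0 1)) (hfm : StrictMonoOn f (Set.Icc 0 1))
    (hfb : Set.BijOn f (Set.Icc 0 1) (Set.Icc 0 1))
    (hg : ∀ i, 1 ≤ i → i ≤ n → ∀ s ∈ Set.Icc (t (i - 1)) (t i), g s = β i * s ^ nv i)
    (hg0 : g 0 = 0) (hβ1 : β 1 = 1)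
    (hgcont : ∀ i, 1 ≤ i → i < n → β i * t i ^ nv i = β (i + 1) * t i ^ nv (i + 1)) :
    g 1 = ∏ i ∈ Finset.Ico 1 n, t i ^ (nv i - nv (i + 1)) ∧
    g 1 ≤ 1 ∧ (g 1 = 1 ↔ n = 1) :=
  inverse_degree_profile_value_general n dd hn hdd t β dv nv g ht0 htn htmono hdinc hdvd hnv hg hβ1
    hgcont
end
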